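/- arXiv:1401.0445 — 8 statements merged into one kernel-verified Lean document; each statement's English description precedes it below -/
import Mathlib

section
/- Suppose h is semi-cancellative. Then for all lists T1, T2 : List E and every t : E, bc T1 t = bc T2 t if and only if T1 = T2 (i.e., bc is cancellative in its first argument when the second arguments agree). -/
/-- Block chaining: `bc [] z = []` and `bc (x :: Y) z = h x z :: bc Y (h x z)`. -/
def bc {E : Type*} (h : E → E → E) : List E → E → List E
  | [], _ => []
  | x :: Y, z => h x z :: bc h Y (h x z)

/-- If `h` is semi-cancellative, then `bc` is cancellative in its first argument
when the second arguments agree. -/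
theorem bc_cancel_left {E : Type*} (h : E → E → E)
    (hsc : ∀ t : E, Function.Injective (fun s => h s t) ∧
                    Function.Injective (fun s => h t s)) :
    ∀ (T1 T2 : List E) (t : E), bc h T1 t = bc h T2 t ↔ T1 = T2 := by
  intro T1
  induction T1 with
  | nil =>
    intro T2 t
    cases T2 <;> simp [bc]
  | cons x Y ih =>
    intro T2 t
    cases T2 with
    | nil => simp [bc]
    | cons y Z =>
      simp only [bc, List.cons.injEq]
      constructor
      · rintro ⟨h1, h2⟩
        have hx : x = y := (hsc t).1 h1
        subst hx
        exact ⟨rfl, (ih Z (h x t)).mp h2⟩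
      · rintro ⟨rfl, rfl⟩
        exact ⟨rfl, rfl⟩
end

section
/- Suppose h is semi-cancellative. Then for every list T : List E and all t1, t2 : E, bc T t1 = bc T t2 if and only if T = [] or t1 = t2 (i.e., bc is conditionally cancellative in its second argument). -/
/-- If `h` is semi-cancellative, then `bc` is conditionally cancellative in its
second argument. -/
theorem bc_cond_cancel_right {E : Type*} (h : E → E → E)
    (hsc : ∀ t : E, Function.Injective (fun s => h s t) ∧
                    Function.Injective (fun s => h t s)) :
    ∀ (T : List E) (t1 t2 : E), bc h T t1 = bc h T t2 ↔ T = [] ∨ t1 = t2 := by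
  intro T t1 t2
  constructor
  · intro heq
    cases T with
    | nil => exact Or.inl rfl
    | cons x Y =>
      right
      simp only [bc, List.cons.injEq] at heq
      exact (hsc x).2 heq.1
  · rintro (rfl | rfl) <;> rfl
end

section
/- Suppose h is semi-cancellative. Then for all u1, u2, u3, u4 : E and all lists T1, T2 : List E, if bc (u1 :: T1) u3 = bc (u2 :: T2) u4, then h u1 u3 = h u2 u4 and T1 = T2. -/
lemma bc_inj {E : Type*} (h : E → E → E)
    (hsc : ∀ t : E, Function.Injective (fun s => h s t) ∧
                    Function.Injective (fun s => h t s)) :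
    ∀ (T1 T2 : List E) (z : E), bc h T1 z = bc h T2 z → T1 = T2 := by
  intro T1
  induction T1 with
  | nil => intro T2 z hz; cases T2 <;> simp_all [bc]
  | cons x Y ih =>
    intro T2 z hz
    cases T2 with
    | nil => simp [bc] at hz
    | cons y Z =>
      simp only [bc, List.cons.injEq] at hz
      obtain ⟨h1, h2⟩ := hz
      have hx : x = y := (hsc z).1 h1
      subst hx
      exact congrArg _ (ih Z _ h2)

/-- If `h` is semi-cancellative and `bc (u1 :: T1) u3 = bc (u2 :: T2) u4`, then
`h u1 u3 = h u2 u4` and `T1 = T2`. -/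
theorem bc_cons_eq {E : Type*} (h : E → E → E)
    (hsc : ∀ t : E, Function.Injective (fun s => h s t) ∧
                    Function.Injective (fun s => h t s)) :
    ∀ (u1 u2 u3 u4 : E) (T1 T2 : List E),
      bc h (u1 :: T1) u3 = bc h (u2 :: T2) u4 →
        h u1 u3 = h u2 u4 ∧ T1 = T2 := by
  intro u1 u2 u3 u4 T1 T2 heq
  simp only [bc, List.cons.injEq] at heq
  obtain ⟨h1, h2⟩ := heq
  exact ⟨h1, bc_inj h hsc T1 T2 _ (h1 ▸ h2)⟩
end

section
/- For all terms s, t1, t2 : T, if g s t1 ≈ g s t2 then t1 ≈ t2; i.e., g is left-cancellative modulo the axiom g(h(x,y), y) = x. -/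
/-- Element-terms generated by atoms `A` and binary constructors `h`, `g`. -/
inductive T (A : Type*) : Type _
  | atom : A → T A
  | h : T A → T A → T A
  | g : T A → T A → T A

/-- The smallest congruence on `T A` containing `g (h x y) y ≈ x`,
i.e. equality modulo the collapsing rewrite rule `g(h(x,y), y) → x`. -/
inductive Eqv {A : Type*} : T A → T A → Prop
  | collapse (x y : T A) : Eqv (T.g (T.h x y) y) x
  | refl (x : T A) : Eqv x x
  | symm {x y : T A} : Eqv x y → Eqv y x
  | trans {x y z : T A} : Eqv x y → Eqv y z → Eqv x z
  | hcong {x₁ x₂ y₁ y₂ : T A} : Eqv x₁ x₂ → Eqv y₁ y₂ → Eqv (T.h x₁ y₁) (T.h x₂ y₂)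
  | gcong {x₁ x₂ y₁ y₂ : T A} : Eqv x₁ x₂ → Eqv y₁ y₂ → Eqv (T.g x₁ y₁) (T.g x₂ y₂)

open Classical in
/-- Combine two normal forms with `g`, performing the collapse if applicable. -/
noncomputable def nfg {A : Type*} (x y : T A) : T A :=
  match x with
  | T.h z w => if w = y then z else T.g (T.h z w) y
  | x => T.g x y

/-- Normal form of a term. -/
noncomputable def nf {A : Type*} : T A → T A
  | .atom a => .atom a
  | .h x y => .h (nf x) (nf y)
  | .g x y => nfg (nf x) (nf y)

lemma nf_sound {A : Type*} {x y : T A} (e : Eqv x y) : nf x = nf y := by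
  induction e with
  | collapse x y => simp [nf, nfg]
  | refl x => rfl
  | symm _ ih => exact ih.symm
  | trans _ _ ih1 ih2 => exact ih1.trans ih2
  | hcong _ _ ih1 ih2 => simp [nf, ih1, ih2]
  | gcong _ _ ih1 ih2 => simp [nf, ih1, ih2]

lemma eqv_g_nfg {A : Type*} (x y : T A) : Eqv (T.g x y) (nfg x y) := by
  cases x with
  | h z w =>
    by_cases hw : w = y
    · subst hw; simpa [nfg] using Eqv.collapse z w
    · simp [nfg, hw]; exact Eqv.refl _
  | atom a => exact Eqv.refl _
  | g a b => exact Eqv.refl _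

lemma eqv_nf {A : Type*} (x : T A) : Eqv x (nf x) := by
  induction x with
  | atom a => exact Eqv.refl _
  | h a b iha ihb => exact Eqv.hcong iha ihb
  | g a b iha ihb => exact Eqv.trans (Eqv.gcong iha ihb) (eqv_g_nfg _ _)

lemma nfg_cancel {A : Type*} {s t1 t2 : T A} (h : nfg s t1 = nfg s t2) : t1 = t2 := by
  cases s with
  | h z w =>
    simp only [nfg] at h
    split_ifs at h with h1 h2 h2
    · rw [← h1, ← h2]
    · exfalso
      have hs := congrArg SizeOf.sizeOf h
      simp only [T.g.sizeOf_spec, T.h.sizeOf_spec] at hs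
      omega
    · exfalso
      have hs := congrArg SizeOf.sizeOf h
      simp only [T.g.sizeOf_spec, T.h.sizeOf_spec] at hs
      omega
    · injection h
  | atom a => simp only [nfg] at h; injection h
  | g a b => simp only [nfg] at h; injection h

/-- `g` is left-cancellative modulo the axiom `g(h(x,y), y) = x`. -/
theorem g_left_cancellative {A : Type*} :
    ∀ s t1 t2 : T A, Eqv (T.g s t1) (T.g s t2) → Eqv t1 t2 := by
  intro s t1 t2 e
  have h := nf_sound e
  simp only [nf] at h
  have := nfg_cancel h
  exact Eqv.trans (eqv_nf t1) (this ▸ Eqv.symm (eqv_nf t2))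
end

section
/- Suppose g (h u x) x = u for all u, x : E (g is a left inverse for h). Then for every list U : List E and every x : E, db (bc U x) x = U; i.e., the equation db(bc(X,y), y) = X is an inductive consequence of the other axioms of DBC. -/
/-- Block-chained decryption: `db [] z = []` and `db (x :: Y) z = g x z :: db Y x`. -/
def db {E : Type*} (g : E → E → E) : List E → E → List E
  | [], _ => []
  | x :: Y, z => g x z :: db g Y x

/-- If `g` is a left inverse for `h`, then `db (bc U x) x = U`:
the axiom `db(bc(X,y), y) = X` is an inductive consequence of the others. -/
theorem db_bc {E : Type*} (h g : E → E → E)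
    (hinv : ∀ u x : E, g (h u x) x = u) :
    ∀ (U : List E) (x : E), db g (bc h U x) x = U := by
  intro U
  induction U with
  | nil => intro x; simp [bc, db]
  | cons u U ih => intro x; simp [bc, db, hinv, ih]
end

section
/- There are no lists U, V, W, L : List E and elements z, a, a', b : E satisfying U = bc V z, V = bc W a, W = a' :: L, and L = bc U b simultaneously; i.e., the BC-unification problem {U =? bc(V,z), V =? bc(W,a), W =? cons(a,L), L =? bc(U,b)} is unsatisfiable (an occur-check violation through a chaining cycle). -/
theorem bc_length {E : Type*} (h : E → E → E) : ∀ (Y : List E) (z : E), (bc h Y z).length = Y.length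
  | [], _ => rfl
  | x :: Y, z => by simp [bc, bc_length h Y]

/-- The problem `{U =? bc(V,z), V =? bc(W,a), W =? cons(a,L), L =? bc(U,b)}` is
unsatisfiable: an occur-check violation through a chaining cycle. -/
theorem occur_check_cycle {E : Type*} (h : E → E → E) :
    ¬ ∃ (U V W L : List E) (z a a' b : E),
        U = bc h V z ∧ V = bc h W a ∧ W = a' :: L ∧ L = bc h U b := by
  rintro ⟨U, V, W, L, z, a, a', b, hU, hV, hW, hL⟩
  have := congrArg List.length hU
  simp [bc_length, hV, hW, hL] at this
end

section
/- The one-step rewrite relation → of the system BC is terminating: there is no infinite sequence of terms t0 → t1 → t2 → ⋯ (of either sort); equivalently, the converse of → is a well-founded relation on ETerm and on LTerm. -/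
/-- Two-sorted ground element-terms: atoms and `h`. -/
inductive ETerm (A : Type*) : Type _
  | atom : A → ETerm A
  | h : ETerm A → ETerm A → ETerm A

/-- Two-sorted ground list-terms: `nil`, `cons` and `bc`. -/
inductive LTerm (A : Type*) : Type _
  | nil : LTerm A
  | cons : ETerm A → LTerm A → LTerm A
  | bc : LTerm A → ETerm A → LTerm A

/-- One-step rewriting of the system BC on element-terms
(closure of the rules under the constructor `h`). -/
inductive EStep {A : Type*} : ETerm A → ETerm A → Prop
  | hLeft {x x' y : ETerm A} : EStep x x' → EStep (ETerm.h x y) (ETerm.h x' y)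
  | hRight {x y y' : ETerm A} : EStep y y' → EStep (ETerm.h x y) (ETerm.h x y')

/-- One-step rewriting of the system BC on list-terms: the rules
`bc nil z → nil` and `bc (cons x Y) z → cons (h x z) (bc Y (h x z))`,
closed under all constructor contexts. -/
inductive LStep {A : Type*} : LTerm A → LTerm A → Prop
  | bcNil (z : ETerm A) : LStep (LTerm.bc LTerm.nil z) LTerm.nil
  | bcCons (x z : ETerm A) (Y : LTerm A) :
      LStep (LTerm.bc (LTerm.cons x Y) z)
            (LTerm.cons (ETerm.h x z) (LTerm.bc Y (ETerm.h x z)))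
  | consHead {x x' : ETerm A} {Y : LTerm A} :
      EStep x x' → LStep (LTerm.cons x Y) (LTerm.cons x' Y)
  | consTail {x : ETerm A} {Y Y' : LTerm A} :
      LStep Y Y' → LStep (LTerm.cons x Y) (LTerm.cons x Y')
  | bcLeft {X X' : LTerm A} {z : ETerm A} :
      LStep X X' → LStep (LTerm.bc X z) (LTerm.bc X' z)
  | bcRight {X : LTerm A} {z z' : ETerm A} :
      EStep z z' → LStep (LTerm.bc X z) (LTerm.bc X z')

/-- `EStep` is in fact the empty relation. -/
theorem estep_empty {A : Type*} {x y : ETerm A} (h : EStep x y) : False := by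
  induction h <;> assumption

/-- Measure on list-terms. -/
def lmeasure {A : Type*} : LTerm A → ℕ
  | LTerm.nil => 0
  | LTerm.cons _ Y => lmeasure Y + 1
  | LTerm.bc X _ => 2 * lmeasure X + 1

theorem lstep_decr {A : Type*} {s t : LTerm A} (h : LStep s t) :
    lmeasure t < lmeasure s := by
  induction h with
  | bcNil z => simp [lmeasure]
  | bcCons x z Y => simp [lmeasure]; omega
  | consHead h => exact absurd h estep_empty
  | consTail h ih => simp [lmeasure]; omega
  | bcLeft h ih => simp [lmeasure]; omega
  | bcRight h => exact absurd h estep_empty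

/-- The one-step rewrite relation of BC is terminating: the converse of `→`
is well-founded on both sorts. -/
theorem bc_rewrite_terminating {A : Type*} :
    WellFounded (fun s t : ETerm A => EStep t s) ∧
    WellFounded (fun s t : LTerm A => LStep t s) := by
  constructor
  · exact ⟨fun t => ⟨t, fun s h => absurd h estep_empty⟩⟩
  · have : Subrelation (fun s t : LTerm A => LStep t s)
        (InvImage (· < ·) lmeasure) := fun h => lstep_decr h
    exact this.wf (InvImage.wf lmeasure Nat.lt_wfRel.wf)
end

section
/- The one-step rewrite relation → of the system BC is confluent: for all terms t, u, v (of the same sort), if t →* u and t →* v then there exists a term w with u →* w and v →* w. (Together with termination, this establishes that BC is a convergent rewrite system.) -/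
theorem Relation.ReflGen.lift {α β : Type*} {r : α → α → Prop} {p : β → β → Prop}
    {a b : α} (f : α → β) (h : ∀ a b, r a b → p (f a) (f b))
    (hab : Relation.ReflGen r a b) :
    Relation.ReflGen p (f a) (f b) := by
  cases hab with
  | refl => exact .refl
  | single hab => exact .single (h _ _ hab)

section BC

variable {A : Type*}

theorem not_eStep {t u : ETerm A} : ¬EStep t u := by
  intro h
  induction h <;> assumption

theorem not_lStep_nil {u : LTerm A} : ¬LStep LTerm.nil u := nofun

open Relation in
theorem LStep.join_reflGen {a b c : LTerm A} (hb : LStep a b) (hc : LStep a c) :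
    Join (ReflGen LStep) b c := by
  induction hb generalizing c with
  | bcNil z =>
    cases hc with
    | bcNil => exact ⟨_, .refl, .refl⟩
    | bcLeft h => exact (not_lStep_nil h).elim
    | bcRight h => exact (not_eStep h).elim
  | bcCons x z Y =>
    cases hc with
    | bcCons => exact ⟨_, .refl, .refl⟩
    | bcLeft h =>
      cases h with
      | consHead h => exact (not_eStep h).elim
      -- overlap at the variable `Y`: both sides reach `cons (h x z) (bc Y' (h x z))`
      | consTail h => exact ⟨_, .single (.consTail (.bcLeft h)), .single (.bcCons x z _)⟩
    | bcRight h => exact (not_eStep h).elim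
  | consHead h => exact (not_eStep h).elim
  | consTail _ ih =>
    cases hc with
    | consHead h => exact (not_eStep h).elim
    | consTail h =>
      obtain ⟨d, hbd, hcd⟩ := ih h
      exact ⟨_, hbd.lift (LTerm.cons _) fun _ _ => .consTail,
        hcd.lift (LTerm.cons _) fun _ _ => .consTail⟩
  | bcLeft hb ih =>
    cases hc with
    | bcNil => exact (not_lStep_nil hb).elim
    | bcCons =>
      cases hb with
      | consHead h => exact (not_eStep h).elim
      | consTail h => exact ⟨_, .single (.bcCons _ _ _), .single (.consTail (.bcLeft h))⟩
    | bcLeft h =>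
      obtain ⟨d, hbd, hcd⟩ := ih h
      exact ⟨_, hbd.lift (LTerm.bc · _) fun _ _ => .bcLeft,
        hcd.lift (LTerm.bc · _) fun _ _ => .bcLeft⟩
    | bcRight h => exact (not_eStep h).elim
  | bcRight h => exact (not_eStep h).elim

end BC

/-- The one-step rewrite relation of BC is confluent (on both sorts). -/
theorem bc_rewrite_confluent {A : Type*} :
    (∀ t u v : ETerm A, Relation.ReflTransGen EStep t u →
        Relation.ReflTransGen EStep t v →
        ∃ w, Relation.ReflTransGen EStep u w ∧ Relation.ReflTransGen EStep v w) ∧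
    (∀ t u v : LTerm A, Relation.ReflTransGen LStep t u →
        Relation.ReflTransGen LStep t v →
        ∃ w, Relation.ReflTransGen LStep u w ∧ Relation.ReflTransGen LStep v w) := by
  refine ⟨fun t u v htu htv => ?_, fun t u v htu htv => ?_⟩
  · obtain rfl := (Relation.reflTransGen_iff_eq fun _ => not_eStep).mp htu
    obtain rfl := (Relation.reflTransGen_iff_eq fun _ => not_eStep).mp htv
    exact ⟨_, .refl, .refl⟩
  · refine Relation.church_rosser (fun a b c hb hc => ?_) htu htv
    obtain ⟨d, hbd, hcd⟩ := hb.join_reflGen hc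
    exact ⟨d, hbd, hcd.to_reflTransGen⟩
end
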